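/- Let p be a prime, G a finite p-group, k = ZMod p, kG the group algebra with Jacobson radical J, A a finite type with a linear order, RLL the reverse length-lexicographical order on the free monoid M on A, and φ : FreeAlgebra k A →ₐ[k] kG a surjective k-algebra homomorphism with φ(x_a) ∈ J for every generator. Then a word w of length r is an RLL-tip if and only if φ(w) lies in the sum of J^{r+1} and the k-span of {φ(v) : v a word of length r, v <_RLL w}. -/

import Mathlib

/-!
Let `T n = spanWordsGE φ n` be the span of the images of the words of length at least `n`. The
generators map into `J`, so `T n ≤ J ^ n`. Conversely, `φ` is onto, so `kG = k • 1 + T 1`; since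
`T 1 ≤ J` and `J` is proper, over a field this forces `J = T 1`, hence `J ^ n ≤ T 1 ^ n ≤ T n`.
Finally, the words RLL-smaller than `w` are the longer words, which span `J ^ (r + 1)`, together
with the RLL-smaller words of length `r`.
-/

/-- The monomial in the free algebra corresponding to a word in the free monoid. -/
noncomputable def wordMonomial (k : Type*) [CommRing k] {A : Type*} (w : FreeMonoid A) :
    FreeAlgebra k A :=
  FreeMonoid.lift (FreeAlgebra.ι k) w

/-- The strict length-lexicographical order on words. -/
def LLlt {A : Type*} [LinearOrder A] (w₁ w₂ : FreeMonoid A) : Prop :=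
  w₁.toList.length < w₂.toList.length ∨
    (w₁.toList.length = w₂.toList.length ∧ List.Lex (· < ·) w₁.toList w₂.toList)

/-- The strict reverse length-lexicographical order. -/
def RLLlt {A : Type*} [LinearOrder A] (w₁ w₂ : FreeMonoid A) : Prop :=
  LLlt w₂ w₁

lemma wordMonomial_one {k : Type*} [CommRing k] {A : Type*} :
    wordMonomial k (1 : FreeMonoid A) = 1 :=
  map_one _

lemma wordMonomial_mul {k : Type*} [CommRing k] {A : Type*} (w v : FreeMonoid A) :
    wordMonomial k (w * v) = wordMonomial k w * wordMonomial k v :=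
  map_mul _ _ _

lemma wordMonomial_of {k : Type*} [CommRing k] {A : Type*} (a : A) :
    wordMonomial k (FreeMonoid.of a) = FreeAlgebra.ι k a :=
  FreeMonoid.lift_eval_of _ _

lemma span_range_wordMonomial (k : Type*) [CommRing k] (A : Type*) :
    Submodule.span k (Set.range (wordMonomial k : FreeMonoid A → FreeAlgebra k A)) = ⊤ := by
  have hrange : Set.range (wordMonomial k : FreeMonoid A → FreeAlgebra k A) =
      (Submonoid.closure (Set.range (FreeAlgebra.ι k (X := A))) : Set (FreeAlgebra k A)) := by
    rw [← FreeMonoid.mrange_lift, MonoidHom.coe_mrange]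
    rfl
  rw [hrange, ← Algebra.adjoin_eq_span, FreeAlgebra.adjoin_range_ι, Algebra.top_toSubmodule]

section WordSpan

variable {k : Type*} [CommRing k] {A : Type*} {R : Type*} [Ring R] [Algebra k R]
  (φ : FreeAlgebra k A →ₐ[k] R)

def spanWordsGE (n : ℕ) : Submodule k R :=
  Submodule.span k ((fun v => φ (wordMonomial k v)) '' {v | n ≤ v.toList.length})

lemma spanWordsGE_zero (hsurj : Function.Surjective φ) : spanWordsGE φ 0 = ⊤ := by
  have himage : (fun v => φ (wordMonomial k v)) '' {v : FreeMonoid A | 0 ≤ v.toList.length} =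
      φ.toLinearMap '' Set.range (wordMonomial k) := by
    simp only [zero_le, Set.ofPred_true, Set.image_univ, ← Set.range_comp]
    rfl
  rw [spanWordsGE, himage, Submodule.span_image, span_range_wordMonomial, Submodule.map_top,
    LinearMap.range_eq_top]
  exact hsurj

lemma spanWordsGE_zero_eq_span_one_sup :
    spanWordsGE φ 0 = Submodule.span k {1} ⊔ spanWordsGE φ 1 := by
  have hwords : {v : FreeMonoid A | 0 ≤ v.toList.length} = {1} ∪ {v | 1 ≤ v.toList.length} := by
    ext v
    rcases eq_or_ne v 1 with rfl | hv
    · simp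
    · simpa [hv, Nat.one_le_iff_ne_zero] using fun h => hv (FreeMonoid.toList.injective h)
  rw [spanWordsGE, hwords, Set.image_union, Submodule.span_union, Set.image_singleton,
    wordMonomial_one, map_one, spanWordsGE]

lemma spanWordsGE_mul_le (m n : ℕ) :
    spanWordsGE φ m * spanWordsGE φ n ≤ spanWordsGE φ (m + n) := by
  rw [spanWordsGE, spanWordsGE, Submodule.span_mul_span, Submodule.span_le]
  rintro _ ⟨_, ⟨v, hv, rfl⟩, _, ⟨u, hu, rfl⟩, rfl⟩
  refine Submodule.subset_span ⟨v * u, ?_, by simp only [wordMonomial_mul, map_mul]⟩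
  simp only [Set.mem_ofPred_eq, FreeMonoid.toList_mul, List.length_append] at hv hu ⊢
  omega

variable {J : Ideal R}

lemma map_wordMonomial_mem_pow (hrad : ∀ a, φ (FreeAlgebra.ι k a) ∈ J) (v : FreeMonoid A) :
    φ (wordMonomial k v) ∈ J ^ v.toList.length := by
  induction v using FreeMonoid.inductionOn' with
  | one => simp [wordMonomial_one, Submodule.pow_zero, Ideal.one_eq_top]
  | of_mul a v ih =>
    rw [wordMonomial_mul, map_mul φ, wordMonomial_of, FreeMonoid.toList_of_mul, List.length_cons]
    rcases eq_or_ne v 1 with rfl | hv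
    · simpa [wordMonomial_one, Submodule.pow_one] using hrad a
    · rw [Submodule.pow_succ' J (n := v.toList.length) (FreeMonoid.length_eq_zero.not.mpr hv)]
      exact Submodule.mul_mem_mul (hrad a) ih

lemma spanWordsGE_le_pow (hrad : ∀ a, φ (FreeAlgebra.ι k a) ∈ J) (n : ℕ) :
    spanWordsGE φ n ≤ (J ^ n).restrictScalars k := by
  rw [spanWordsGE, Submodule.span_le]
  rintro _ ⟨v, hv, rfl⟩
  exact Ideal.pow_le_pow_right hv (map_wordMonomial_mem_pow φ hrad v)

end WordSpan

section OverField

variable {k : Type*} [Field k] {A : Type*} {R : Type*} [Ring R] [Algebra k R]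
  (φ : FreeAlgebra k A →ₐ[k] R) {J : Ideal R}

lemma restrictScalars_le_spanWordsGE_one (hsurj : Function.Surjective φ)
    (hrad : ∀ a, φ (FreeAlgebra.ι k a) ∈ J) (hJ : J ≠ ⊤) :
    J.restrictScalars k ≤ spanWordsGE φ 1 := by
  intro x hx
  have hx' : x ∈ Submodule.span k {1} ⊔ spanWordsGE φ 1 := by
    rw [← spanWordsGE_zero_eq_span_one_sup, spanWordsGE_zero φ hsurj]
    exact Submodule.mem_top
  obtain ⟨_, hc, t, ht, rfl⟩ := Submodule.mem_sup.mp hx'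
  obtain ⟨c, rfl⟩ := Submodule.mem_span_singleton.mp hc
  have htJ : t ∈ J := by simpa [Submodule.pow_one] using spanWordsGE_le_pow φ hrad 1 ht
  have hcJ : c • (1 : R) ∈ J := by simpa using J.sub_mem hx htJ
  obtain rfl : c = 0 := by
    by_contra hc0
    refine hJ ((Ideal.eq_top_iff_one J).mpr ?_)
    simpa [smul_smul, inv_mul_cancel₀ hc0] using (J.restrictScalars k).smul_mem c⁻¹ hcJ
  simpa using ht

theorem spanWordsGE_eq_pow (hsurj : Function.Surjective φ)
    (hrad : ∀ a, φ (FreeAlgebra.ι k a) ∈ J) (hJ : J ≠ ⊤) (n : ℕ) :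
    spanWordsGE φ n = (J ^ n).restrictScalars k := by
  refine le_antisymm (spanWordsGE_le_pow φ hrad n) ?_
  induction n with
  | zero => simp [spanWordsGE_zero φ hsurj]
  | succ n ih =>
    rw [Submodule.pow_succ, Ideal.restrictScalars_mul]
    exact (mul_le_mul' ih (restrictScalars_le_spanWordsGE_one φ hsurj hrad hJ)).trans
      (spanWordsGE_mul_le φ n 1)

end OverField

lemma setOf_rllLt_eq_union {A : Type*} [LinearOrder A] {r : ℕ} {w : FreeMonoid A}
    (hw : w.toList.length = r) :
    {v | RLLlt v w} =
      {v : FreeMonoid A | r + 1 ≤ v.toList.length} ∪ {v | v.toList.length = r ∧ RLLlt v w} := by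
  ext v
  simp only [Set.mem_union, Set.mem_ofPred_eq]
  constructor
  · rintro (hlonger | ⟨hlen, hlex⟩)
    · exact Or.inl (by omega)
    · exact Or.inr ⟨by omega, Or.inr ⟨hlen, hlex⟩⟩
  · rintro (hlonger | ⟨-, hvw⟩)
    · exact Or.inl (by omega)
    · exact hvw

theorem rll_tip_iff_mod_radical_power_general
    (p : ℕ) (hp : p.Prime) (G : Type*) [Group G]
    (A : Type*) [LinearOrder A]
    (J : Ideal (MonoidAlgebra (ZMod p) G))
    (hJ : J = (⊥ : Ideal (MonoidAlgebra (ZMod p) G)).jacobson)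
    (φ : FreeAlgebra (ZMod p) A →ₐ[ZMod p] MonoidAlgebra (ZMod p) G)
    (hsurj : Function.Surjective φ)
    (hrad : ∀ a : A, φ (FreeAlgebra.ι (ZMod p) a) ∈ J)
    (IsTip : FreeMonoid A → Prop)
    (hTip : ∀ w, IsTip w ↔ φ (wordMonomial (ZMod p) w) ∈
      Submodule.span (ZMod p)
        ((fun v => φ (wordMonomial (ZMod p) v)) '' {v | RLLlt v w})) :
    ∀ (r : ℕ) (w : FreeMonoid A), w.toList.length = r →
      (IsTip w ↔ φ (wordMonomial (ZMod p) w) ∈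
        Submodule.restrictScalars (ZMod p) (J ^ (r + 1)) ⊔
        Submodule.span (ZMod p)
          ((fun v => φ (wordMonomial (ZMod p) v)) ''
            {v : FreeMonoid A | v.toList.length = r ∧ RLLlt v w})) := by
  have : Fact p.Prime := ⟨hp⟩
  have hJ_ne_top : J ≠ ⊤ := by
    rw [hJ, Ne, Ideal.jacobson_eq_top_iff]
    exact bot_ne_top
  intro r w hw
  rw [hTip w, setOf_rllLt_eq_union hw, Set.image_union, Submodule.span_union,
    ← spanWordsGE_eq_pow φ hsurj hrad hJ_ne_top]
  rfl

/-- a word `w` of length `r` is an RLL-tip if and only if `φ(w)` lies in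
the sum of `J^{r+1}` and the span of the images of the length-`r` words that are
RLL-smaller than `w`. -/
theorem rll_tip_iff_mod_radical_power
    (p : ℕ) (hp : p.Prime) (G : Type*) [Group G] [Fintype G] (hG : IsPGroup p G)
    (A : Type*) [Finite A] [LinearOrder A]
    (J : Ideal (MonoidAlgebra (ZMod p) G))
    (hJ : J = (⊥ : Ideal (MonoidAlgebra (ZMod p) G)).jacobson)
    (φ : FreeAlgebra (ZMod p) A →ₐ[ZMod p] MonoidAlgebra (ZMod p) G)
    (hsurj : Function.Surjective φ)
    (hrad : ∀ a : A, φ (FreeAlgebra.ι (ZMod p) a) ∈ J)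
    (IsTip : FreeMonoid A → Prop)
    (hTip : ∀ w, IsTip w ↔ φ (wordMonomial (ZMod p) w) ∈
      Submodule.span (ZMod p)
        ((fun v => φ (wordMonomial (ZMod p) v)) '' {v | RLLlt v w})) :
    ∀ (r : ℕ) (w : FreeMonoid A), w.toList.length = r →
      (IsTip w ↔ φ (wordMonomial (ZMod p) w) ∈
        Submodule.restrictScalars (ZMod p) (J ^ (r + 1)) ⊔
        Submodule.span (ZMod p)
          ((fun v => φ (wordMonomial (ZMod p) v)) ''
            {v : FreeMonoid A | v.toList.length = r ∧ RLLlt v w})) :=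
  rll_tip_iff_mod_radical_power_general p hp G A J hJ φ hsurj hrad IsTip hTip
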